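/- arXiv:1708.00480 — 4 statements merged into one kernel-verified Lean document; each statement's English description precedes it below -/
import Mathlib

section
/- Let m ∈ ℕ, let g be a nondegenerate symmetric bilinear form on ℝ^m, let f : ℝ^m → ℝ^m be a C¹ diffeomorphism, let p ∈ ℝ^m, and let a > 0 and 0 < b < 1. Suppose u, v, w ∈ ℝ^m satisfy w = u − v, and: (1) a⁻¹ b⁻ⁿ |g(w,w)| ≤ |g(Dfⁿ_p w, Dfⁿ_p w)| for all n ∈ ℕ; (2) |g(Dfⁿ_p u, Dfⁿ_p u)| ≤ a bⁿ |g(u,u)| and |g(Dfⁿ_p v, Dfⁿ_p v)| ≤ a bⁿ |g(v,v)| for all n ∈ ℕ; (3) g(Dfⁿ_p u, Dfⁿ_p v) → 0 as n → ∞. Then g(w,w) = 0. -/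
open Filter Topology

noncomputable section

/-- ℝ^m -/
abbrev Vec (m : ℕ) := Fin m → ℝ

/-- Derivative at `p` of the `n`-th iterate of `f`. -/
def Dn {m : ℕ} (f : Vec m → Vec m) (p : Vec m) (n : ℕ) : Vec m →L[ℝ] Vec m :=
  fderiv ℝ (f^[n]) p

/-- Key step of the uniqueness proof: a vector `w = u - v` satisfying the unstable
expansion estimate, with `u`, `v` exponentially contracted and mixed terms tending
to zero, must be null. -/
theorem expansion_and_contraction_forces_null {m : ℕ}
    (g : Vec m →ₗ[ℝ] Vec m →ₗ[ℝ] ℝ)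
    (hgsymm : ∀ u v : Vec m, g u v = g v u)
    (hgnd : ∀ v : Vec m, (∀ w : Vec m, g v w = 0) → v = 0)
    (f f' : Vec m → Vec m)
    (hf : ContDiff ℝ 1 f) (hf' : ContDiff ℝ 1 f')
    (hli : Function.LeftInverse f' f) (hri : Function.RightInverse f' f)
    (p : Vec m) (a b : ℝ) (ha : 0 < a) (hb0 : 0 < b) (hb1 : b < 1)
    (u v w : Vec m) (hw : w = u - v)
    (h1 : ∀ n : ℕ, a⁻¹ * (b ^ n)⁻¹ * |g w w| ≤ |g (Dn f p n w) (Dn f p n w)|)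
    (h2u : ∀ n : ℕ, |g (Dn f p n u) (Dn f p n u)| ≤ a * b ^ n * |g u u|)
    (h2v : ∀ n : ℕ, |g (Dn f p n v) (Dn f p n v)| ≤ a * b ^ n * |g v v|)
    (h3 : Tendsto (fun n => g (Dn f p n u) (Dn f p n v)) atTop (𝓝 0)) :
    g w w = 0 := by
  by_contra hne
  have habs : 0 < |g w w| := abs_pos.mpr hne
  -- decomposition of the quadratic form along w = u - v
  have hdecomp : ∀ n : ℕ, g (Dn f p n w) (Dn f p n w)
      = g (Dn f p n u) (Dn f p n u) - 2 * g (Dn f p n u) (Dn f p n v)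
        + g (Dn f p n v) (Dn f p n v) := by
    intro n
    have hDw : Dn f p n w = Dn f p n u - Dn f p n v := by
      rw [hw, map_sub]
    rw [hDw]
    simp only [map_sub, LinearMap.sub_apply]
    rw [hgsymm (Dn f p n v) (Dn f p n u)]
    ring
  -- u and v terms tend to 0
  have hbpow : Tendsto (fun n : ℕ => b ^ n) atTop (𝓝 0) :=
    tendsto_pow_atTop_nhds_zero_of_lt_one hb0.le hb1
  have haux : ∀ c : ℝ, Tendsto (fun n : ℕ => a * b ^ n * c) atTop (𝓝 0) := by
    intro c
    have := (hbpow.const_mul a).mul_const c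
    simpa using this
  have huu : Tendsto (fun n => g (Dn f p n u) (Dn f p n u)) atTop (𝓝 0) := by
    have h := squeeze_zero (fun n => abs_nonneg _) h2u (haux _)
    exact (tendsto_zero_iff_abs_tendsto_zero _).mpr (by simpa [Function.comp_def] using h)
  have hvv : Tendsto (fun n => g (Dn f p n v) (Dn f p n v)) atTop (𝓝 0) := by
    have h := squeeze_zero (fun n => abs_nonneg _) h2v (haux _)
    exact (tendsto_zero_iff_abs_tendsto_zero _).mpr (by simpa [Function.comp_def] using h)
  have hww : Tendsto (fun n => g (Dn f p n w) (Dn f p n w)) atTop (𝓝 0) := by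
    have := (huu.sub (h3.const_mul 2)).add hvv
    simp only [mul_zero, sub_zero, add_zero, zero_sub, zero_add] at this
    refine Tendsto.congr (fun n => (hdecomp n).symm) ?_
    simpa using this
  have hwwabs : Tendsto (fun n => |g (Dn f p n w) (Dn f p n w)|) atTop (𝓝 0) := by
    simpa using hww.abs
  -- lower bound
  have hlb : ∀ n : ℕ, a⁻¹ * |g w w| ≤ |g (Dn f p n w) (Dn f p n w)| := by
    intro n
    refine le_trans ?_ (h1 n)
    have h1le : (1 : ℝ) ≤ (b ^ n)⁻¹ := by
      rw [le_inv_comm₀ one_pos (pow_pos hb0 n)]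
      · simpa using pow_le_one₀ hb0.le hb1.le
    calc a⁻¹ * |g w w| = a⁻¹ * 1 * |g w w| := by ring
      _ ≤ a⁻¹ * (b ^ n)⁻¹ * |g w w| := by
          apply mul_le_mul_of_nonneg_right _ (abs_nonneg _)
          exact mul_le_mul_of_nonneg_left h1le (inv_nonneg.mpr ha.le)
  have hfinal : a⁻¹ * |g w w| ≤ 0 := ge_of_tendsto' hwwabs hlb
  have : 0 < a⁻¹ * |g w w| := mul_pos (inv_pos.mpr ha) habs
  linarith
end
end

section
/- Let m ∈ ℕ, let g be a nondegenerate symmetric bilinear form on ℝ^m, let f : ℝ^m → ℝ^m be a C¹ diffeomorphism, and let C ⊆ ℝ^m be compact with f⁻¹(C) = C. Suppose C is hyperbolic for f up to the distribution p ↦ Eⁿ(p), with splitting ℝ^m = Eˢ(p) ⊕ Eᵘ(p) ⊕ Eⁿ(p) for p ∈ C. Let p ∈ C, let (p_k) be a sequence in C with p_k → p, and let v_k ∈ Eˢ(p_k) satisfy |g(v_k, v_k)| = 1 and v_k → v for some v ∈ ℝ^m. If v ∈ Eˢ(p) ⊕ Eᵘ(p), then v ∈ Eˢ(p). -/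
open Filter Topology

noncomputable section

/-- `C` is hyperbolic for `f` up to the null distribution `En`, with splitting
`Es ⊕ Eu ⊕ En` and constants `a`, `b`. -/
def IsHypUpTo {m : ℕ} (g : Vec m →ₗ[ℝ] Vec m →ₗ[ℝ] ℝ) (f : Vec m → Vec m)
    (C : Set (Vec m)) (En Es Eu : Vec m → Submodule ℝ (Vec m)) (a b : ℝ) : Prop :=
  0 < a ∧ 0 < b ∧ b < 1 ∧
  ∀ p ∈ C,
    (Es p ⊓ Eu p = ⊥ ∧ (Es p ⊔ Eu p) ⊓ En p = ⊥ ∧ Es p ⊔ Eu p ⊔ En p = ⊤) ∧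
    (∀ v ∈ En p, g v v = 0) ∧
    (∀ v ∈ Es p, v ≠ 0 → g v v ≠ 0) ∧
    (∀ v ∈ Eu p, v ≠ 0 → g v v ≠ 0) ∧
    Submodule.map (fderiv ℝ f p : Vec m →ₗ[ℝ] Vec m) (Es p) = Es (f p) ∧
    Submodule.map (fderiv ℝ f p : Vec m →ₗ[ℝ] Vec m) (Eu p) = Eu (f p) ∧
    (∀ v ∈ Es p,
      (∀ n : ℕ, |g (Dn f p n v) (Dn f p n v)| ≤ a * b ^ n * |g v v|) ∧
      (∀ w : Vec m,
        (∀ n : ℕ, |g (Dn f p n w) (Dn f p n w)| ≤ a * b ^ n * |g w w|) →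
        Tendsto (fun n => g (Dn f p n v) (Dn f p n w)) atTop (𝓝 0))) ∧
    (∀ v ∈ Eu p, ∀ n : ℕ,
      a⁻¹ * (b ^ n)⁻¹ * |g v v| ≤ |g (Dn f p n v) (Dn f p n v)|)


/-- Key convergence step in the continuity of the stable distribution: a limit
of pseudo-unit stable vectors that lies in `Eˢ(p) ⊕ Eᵘ(p)` lies in `Eˢ(p)`. -/
theorem limit_of_stable_vectors_mem_stable {m : ℕ}
    (g : Vec m →ₗ[ℝ] Vec m →ₗ[ℝ] ℝ)
    (hgsymm : ∀ u v : Vec m, g u v = g v u)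
    (hgnd : ∀ v : Vec m, (∀ w : Vec m, g v w = 0) → v = 0)
    (f f' : Vec m → Vec m)
    (hf : ContDiff ℝ 1 f) (hf' : ContDiff ℝ 1 f')
    (hli : Function.LeftInverse f' f) (hri : Function.RightInverse f' f)
    (C : Set (Vec m)) (hC : IsCompact C) (hCinv : f ⁻¹' C = C)
    (En Es Eu : Vec m → Submodule ℝ (Vec m)) (a b : ℝ)
    (hhyp : IsHypUpTo g f C En Es Eu a b)
    (p : Vec m) (hp : p ∈ C)
    (pk : ℕ → Vec m) (hpk : ∀ k, pk k ∈ C)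
    (hpconv : Tendsto pk atTop (𝓝 p))
    (vk : ℕ → Vec m) (hvk : ∀ k, vk k ∈ Es (pk k))
    (hvknorm : ∀ k, |g (vk k) (vk k)| = 1)
    (v : Vec m) (hvconv : Tendsto vk atTop (𝓝 v))
    (hv : v ∈ Es p ⊔ Eu p) :
    v ∈ Es p := by
  obtain ⟨ha, hb, hb1, hC'⟩ := hhyp
  obtain ⟨-, -, -, hEunz, -, -, hEsdec, hEugrow⟩ := hC' p hp
  -- joint continuity of the bilinear form
  have gcont : Continuous fun x : Vec m × Vec m => g x.1 x.2 := by
    let g' : Vec m →ₗ[ℝ] (Vec m →L[ℝ] ℝ) :=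
      { toFun := fun w => LinearMap.toContinuousLinearMap (g w)
        map_add' := by intro x y; ext z; simp
        map_smul' := by intro c x; ext z; simp }
    have hg' : Continuous fun w => LinearMap.toContinuousLinearMap (g w) :=
      g'.continuous_of_finiteDimensional
    have h := isBoundedBilinearMap_apply.continuous.comp
      ((hg'.comp continuous_fst).prodMk (continuous_snd (Y := Vec m)))
    exact h
  -- |g v v| = 1
  have hgk : Tendsto (fun k => g (vk k) (vk k)) atTop (𝓝 (g v v)) :=
    (gcont.tendsto (v, v)).comp (hvconv.prodMk_nhds hvconv)
  have hgvv : |g v v| = 1 := by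
    have h1 : Tendsto (fun _ : ℕ => (1 : ℝ)) atTop (𝓝 |g v v|) := by
      have := hgk.abs
      simpa [hvknorm] using this
    exact tendsto_nhds_unique h1 tendsto_const_nhds
  -- smoothness and continuity of derivatives of iterates
  have hfn : ∀ n : ℕ, ContDiff ℝ 1 (f^[n]) := by
    intro n
    induction n with
    | zero => simpa using contDiff_id
    | succ n ih => rw [Function.iterate_succ']; exact hf.comp ih
  have hDcont : ∀ n : ℕ, Continuous fun q => Dn f q n := fun n =>
    (hfn n).continuous_fderiv one_ne_zero
  -- the decay estimate passes to the limit vector v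
  have hvdecay : ∀ n : ℕ, |g (Dn f p n v) (Dn f p n v)| ≤ a * b ^ n * |g v v| := by
    intro n
    have hDk : Tendsto (fun k => (Dn f (pk k) n) (vk k)) atTop (𝓝 ((Dn f p n) v)) :=
      (isBoundedBilinearMap_apply.continuous.tendsto ((Dn f p n), v)).comp
        ((((hDcont n).tendsto p).comp hpconv).prodMk_nhds hvconv)
    have hT : Tendsto
        (fun k => |g ((Dn f (pk k) n) (vk k)) ((Dn f (pk k) n) (vk k))|) atTop
        (𝓝 |g ((Dn f p n) v) ((Dn f p n) v)|) :=
      ((gcont.tendsto _).comp (hDk.prodMk_nhds hDk)).abs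
    have hle : ∀ k, |g ((Dn f (pk k) n) (vk k)) ((Dn f (pk k) n) (vk k))| ≤ a * b ^ n := by
      intro k
      have h := ((hC' (pk k) (hpk k)).2.2.2.2.2.2.1 (vk k) (hvk k)).1 n
      simpa [hvknorm k] using h
    have h := le_of_tendsto hT (Filter.Eventually.of_forall hle)
    rw [hgvv, mul_one]
    exact h
  -- decompose v
  rw [Submodule.mem_sup] at hv
  obtain ⟨vs, hvs, vu, hvu, hsum⟩ := hv
  obtain ⟨hvsdecay, hvsT⟩ := hEsdec vs hvs
  have T1 : Tendsto (fun n => g (Dn f p n vs) (Dn f p n v)) atTop (𝓝 0) := hvsT v hvdecay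
  have T2 : Tendsto (fun n => g (Dn f p n vs) (Dn f p n vs)) atTop (𝓝 0) := hvsT vs hvsdecay
  have hbn0 : Tendsto (fun n : ℕ => a * b ^ n) atTop (𝓝 0) := by
    simpa using (tendsto_pow_atTop_nhds_zero_of_lt_one hb.le hb1).const_mul a
  have T3 : Tendsto (fun n => g (Dn f p n v) (Dn f p n v)) atTop (𝓝 0) := by
    refine squeeze_zero_norm (fun n => ?_) hbn0
    have h := hvdecay n
    rw [hgvv, mul_one] at h
    simpa [Real.norm_eq_abs] using h
  have hvu' : vu = v - vs := eq_sub_of_add_eq' hsum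
  have T4 : Tendsto (fun n => g (Dn f p n vu) (Dn f p n vu)) atTop (𝓝 0) := by
    have hexp : ∀ n : ℕ, g (Dn f p n vu) (Dn f p n vu) =
        g (Dn f p n v) (Dn f p n v) - 2 * g (Dn f p n vs) (Dn f p n v)
          + g (Dn f p n vs) (Dn f p n vs) := by
      intro n
      have hD : Dn f p n vu = Dn f p n v - Dn f p n vs := by rw [hvu', map_sub]
      rw [hD]
      have hs := hgsymm (Dn f p n v) (Dn f p n vs)
      simp only [map_sub, LinearMap.sub_apply]
      rw [hs]
      ring
    have h := (T3.sub (T1.const_mul 2)).add T2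
    rw [show (0 : ℝ) - 2 * 0 + 0 = 0 by ring] at h
    exact h.congr fun n => (hexp n).symm
  -- conclude g vu vu = 0
  have key : ∀ n : ℕ, |g vu vu| ≤ a * b ^ n * |g (Dn f p n vu) (Dn f p n vu)| := by
    intro n
    have h1 := hEugrow vu hvu n
    have hpos : (0 : ℝ) < a * b ^ n := mul_pos ha (pow_pos hb n)
    have h2 := mul_le_mul_of_nonneg_left h1 hpos.le
    calc |g vu vu| = a * b ^ n * (a⁻¹ * (b ^ n)⁻¹ * |g vu vu|) := by
          field_simp
      _ ≤ a * b ^ n * |g (Dn f p n vu) (Dn f p n vu)| := h2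
  have hto0 : Tendsto (fun n : ℕ => a * b ^ n * |g (Dn f p n vu) (Dn f p n vu)|)
      atTop (𝓝 0) := by
    simpa using hbn0.mul T4.abs
  have hle0 : |g vu vu| ≤ 0 := ge_of_tendsto hto0 (Filter.Eventually.of_forall key)
  have hvu0 : g vu vu = 0 := abs_eq_zero.mp (le_antisymm hle0 (abs_nonneg _))
  have hvuz : vu = 0 := by
    by_contra h
    exact hEunz vu hvu h hvu0
  rw [← hsum, hvuz, add_zero]
  exact hvs
end
end

section
/- On ℝ⁴ with the bilinear form g(U,V) = u₁v₁ + u₂v₂ − u₃v₃ − u₄v₄, let f : ℝ⁴ → ℝ⁴ be the linear diffeomorphism f(x,y,z,t) = (x/2, y/3, z, 4t). Then the compact invariant set C = {(0,0,0,0)} is hyperbolic for f up to the distribution p ↦ Eⁿ(p) = {(a,a,a,a) : a ∈ ℝ}; that is, there exist constants a > 0, 0 < b < 1 and subspaces Eˢ, Eᵘ of ℝ⁴ with ℝ⁴ = Eˢ ⊕ Eᵘ ⊕ span{(1,1,1,1)} (internal direct sum) such that: (i) every nonzero v ∈ Eˢ ∪ Eᵘ satisfies g(v,v) ≠ 0;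 (ii) f(Eˢ) = Eˢ and f(Eᵘ) = Eᵘ; (iii) for every v ∈ Eˢ and n ∈ ℕ, |g(fⁿ v, fⁿ v)| ≤ a bⁿ |g(v,v)|, and g(fⁿ v, fⁿ w) → 0 as n → ∞ for every w ∈ ℝ⁴ with |g(fⁿ w, fⁿ w)| ≤ a bⁿ |g(w,w)| for all n; (iv) for every v ∈ Eᵘ and n ∈ ℕ, a⁻¹ b⁻ⁿ |g(v,v)| ≤ |g(fⁿ v, fⁿ v)|. -/
open Filter Topology

noncomputable section

/-- The pseudo-Riemannian metric of signature (2,2) on ℝ⁴. -/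
def g4 (U V : ℝ × ℝ × ℝ × ℝ) : ℝ :=
  U.1 * V.1 + U.2.1 * V.2.1 - U.2.2.1 * V.2.2.1 - U.2.2.2 * V.2.2.2

/-- The linear diffeomorphism f(x,y,z,t) = (x/2, y/3, z, 4t). -/
def f4 (p : ℝ × ℝ × ℝ × ℝ) : ℝ × ℝ × ℝ × ℝ :=
  (p.1 / 2, p.2.1 / 3, p.2.2.1, 4 * p.2.2.2)

def Es4 : Submodule ℝ (ℝ × ℝ × ℝ × ℝ) where
  carrier := {p | p.2.2.1 = 0 ∧ p.2.2.2 = 0}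
  add_mem' := by rintro a b ⟨h1, h2⟩ ⟨h3, h4⟩; exact ⟨by simp [h1, h3], by simp [h2, h4]⟩
  zero_mem' := ⟨rfl, rfl⟩
  smul_mem' := by rintro c a ⟨h1, h2⟩; exact ⟨by simp [h1], by simp [h2]⟩

def Eu4 : Submodule ℝ (ℝ × ℝ × ℝ × ℝ) where
  carrier := {p | p.1 = 0 ∧ p.2.1 = 0 ∧ p.2.2.1 = 0}
  add_mem' := by rintro a b ⟨h1, h2, h3⟩ ⟨h4, h5, h6⟩
                 exact ⟨by simp [h1, h4], by simp [h2, h5], by simp [h3, h6]⟩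
  zero_mem' := ⟨rfl, rfl, rfl⟩
  smul_mem' := by rintro c a ⟨h1, h2, h3⟩; exact ⟨by simp [h1], by simp [h2], by simp [h3]⟩

lemma mem_Es4 (p : ℝ × ℝ × ℝ × ℝ) : p ∈ Es4 ↔ p.2.2.1 = 0 ∧ p.2.2.2 = 0 := Iff.rfl

lemma mem_Eu4 (p : ℝ × ℝ × ℝ × ℝ) : p ∈ Eu4 ↔ p.1 = 0 ∧ p.2.1 = 0 ∧ p.2.2.1 = 0 := Iff.rfl

lemma f4_iter (n : ℕ) (p : ℝ × ℝ × ℝ × ℝ) :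
    f4^[n] p = (p.1 / 2 ^ n, p.2.1 / 3 ^ n, p.2.2.1, 4 ^ n * p.2.2.2) := by
  induction n with
  | zero => simp
  | succ n ih =>
    rw [Function.iterate_succ_apply', ih]
    simp only [f4, Prod.mk.injEq, pow_succ]
    exact ⟨by ring, by ring, by trivial, by ring⟩

lemma two_pow_mul (n : ℕ) : ((2:ℝ) ^ n) * 2 ^ n = 4 ^ n := by rw [← mul_pow]; norm_num
lemma three_pow_mul (n : ℕ) : ((3:ℝ) ^ n) * 3 ^ n = 9 ^ n := by rw [← mul_pow]; norm_num

/-- Example 3.1, first part: `{0}` is a hyperbolic set for `f4` up to the null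
distribution spanned by `(1,1,1,1)`. -/
theorem origin_hyperbolic_up_to_1111 :
    f4 ⁻¹' ({(0, 0, 0, 0)} : Set (ℝ × ℝ × ℝ × ℝ)) = {(0, 0, 0, 0)} ∧
    IsCompact ({(0, 0, 0, 0)} : Set (ℝ × ℝ × ℝ × ℝ)) ∧
    ∃ (a b : ℝ) (Es Eu : Submodule ℝ (ℝ × ℝ × ℝ × ℝ)),
      0 < a ∧ 0 < b ∧ b < 1 ∧
      (Es ⊓ Eu = ⊥ ∧
        (Es ⊔ Eu) ⊓ Submodule.span ℝ {((1 : ℝ), (1 : ℝ), (1 : ℝ), (1 : ℝ))} = ⊥ ∧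
        Es ⊔ Eu ⊔ Submodule.span ℝ {((1 : ℝ), (1 : ℝ), (1 : ℝ), (1 : ℝ))} = ⊤) ∧
      (∀ v ∈ Es, v ≠ 0 → g4 v v ≠ 0) ∧
      (∀ v ∈ Eu, v ≠ 0 → g4 v v ≠ 0) ∧
      f4 '' (Es : Set (ℝ × ℝ × ℝ × ℝ)) = Es ∧
      f4 '' (Eu : Set (ℝ × ℝ × ℝ × ℝ)) = Eu ∧
      (∀ v ∈ Es,
        (∀ n : ℕ, |g4 (f4^[n] v) (f4^[n] v)| ≤ a * b ^ n * |g4 v v|) ∧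
        (∀ w : ℝ × ℝ × ℝ × ℝ,
          (∀ n : ℕ, |g4 (f4^[n] w) (f4^[n] w)| ≤ a * b ^ n * |g4 w w|) →
          Tendsto (fun n => g4 (f4^[n] v) (f4^[n] w)) atTop (𝓝 0))) ∧
      (∀ v ∈ Eu, ∀ n : ℕ,
        a⁻¹ * (b ^ n)⁻¹ * |g4 v v| ≤ |g4 (f4^[n] v) (f4^[n] v)|) := by
  refine ⟨?_, isCompact_singleton, 1, 1/4, Es4, Eu4, one_pos, by norm_num, by norm_num,
    ⟨?_, ?_, ?_⟩, ?_, ?_, ?_, ?_, ?_, ?_⟩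
  · -- preimage
    ext p
    simp only [Set.mem_preimage, Set.mem_singleton_iff, f4, Prod.ext_iff]
    constructor
    · rintro ⟨h1, h2, h3, h4⟩; exact ⟨by linarith, by linarith, h3, by linarith⟩
    · rintro ⟨h1, h2, h3, h4⟩; exact ⟨by simp [h1], by simp [h2], h3, by simp [h4]⟩
  · -- Es ⊓ Eu = ⊥
    rw [eq_bot_iff]
    rintro p ⟨⟨h3, h4⟩, h1, h2, _⟩
    simp only [Submodule.mem_bot, Prod.ext_iff]
    exact ⟨h1, h2, h3, h4⟩
  · -- (Es ⊔ Eu) ⊓ span = ⊥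
    rw [eq_bot_iff]
    rintro p ⟨hsup, hspan⟩
    obtain ⟨c, rfl⟩ := Submodule.mem_span_singleton.1 hspan
    have h3 : (c • ((1:ℝ), (1:ℝ), (1:ℝ), (1:ℝ))).2.2.1 = 0 := by
      have hle : Es4 ⊔ Eu4 ≤
          { carrier := {p : ℝ × ℝ × ℝ × ℝ | p.2.2.1 = 0}
            add_mem' := by rintro a b ha hb; simp_all [Set.mem_setOf_eq]
            zero_mem' := rfl
            smul_mem' := by rintro c a ha; simp_all [Set.mem_setOf_eq] } :=
        sup_le (fun p hp => hp.1) (fun p hp => hp.2.2)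
      exact hle hsup
    have hc : c = 0 := by simpa using h3
    simp [hc]
  · -- sup = ⊤
    rw [eq_top_iff]
    rintro p -
    have hdecomp : p = ((p.1 - p.2.2.1, p.2.1 - p.2.2.1, 0, 0) : ℝ × ℝ × ℝ × ℝ)
        + ((0, 0, 0, p.2.2.2 - p.2.2.1) : ℝ × ℝ × ℝ × ℝ)
        + p.2.2.1 • ((1:ℝ), (1:ℝ), (1:ℝ), (1:ℝ)) := by
      simp [Prod.ext_iff]
    rw [hdecomp]
    refine add_mem (add_mem ?_ ?_) ?_
    · exact Submodule.mem_sup_left (Submodule.mem_sup_left ⟨rfl, rfl⟩)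
    · exact Submodule.mem_sup_left (Submodule.mem_sup_right ⟨rfl, rfl, rfl⟩)
    · exact Submodule.mem_sup_right
        (Submodule.smul_mem _ _ (Submodule.mem_span_singleton_self _))
  · -- g4 nonzero on Es
    rintro v ⟨h3, h4⟩ hv heq
    simp only [g4, h3, h4, mul_zero, sub_zero] at heq
    apply hv
    have h1 : v.1 = 0 := by nlinarith [mul_self_nonneg v.1, mul_self_nonneg v.2.1]
    have h2 : v.2.1 = 0 := by nlinarith [mul_self_nonneg v.1, mul_self_nonneg v.2.1]
    simp [Prod.ext_iff, h1, h2, h3, h4]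
  · -- g4 nonzero on Eu
    rintro v ⟨h1, h2, h3⟩ hv heq
    simp only [g4, h1, h2, h3, zero_mul, mul_zero, sub_zero, add_zero, zero_add, zero_sub,
      neg_eq_zero] at heq
    apply hv
    have h4 : v.2.2.2 = 0 := by nlinarith [mul_self_nonneg v.2.2.2]
    simp [Prod.ext_iff, h1, h2, h3, h4]
  · -- f4 '' Es = Es
    ext p
    constructor
    · rintro ⟨q, ⟨h3, h4⟩, rfl⟩
      exact ⟨h3, by simp [f4, h4]⟩
    · rintro ⟨h3, h4⟩
      refine ⟨(2 * p.1, 3 * p.2.1, p.2.2.1, p.2.2.2 / 4), ⟨h3, by simp [h4]⟩, ?_⟩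
      simp only [f4, Prod.ext_iff]
      exact ⟨by ring, by ring, by trivial, by ring⟩
  · -- f4 '' Eu = Eu
    ext p
    constructor
    · rintro ⟨q, ⟨h1, h2, h3⟩, rfl⟩
      exact ⟨by simp [f4, h1], by simp [f4, h2], h3⟩
    · rintro ⟨h1, h2, h3⟩
      refine ⟨(2 * p.1, 3 * p.2.1, p.2.2.1, p.2.2.2 / 4), ⟨by simp [h1], by simp [h2], h3⟩, ?_⟩
      simp only [f4, Prod.ext_iff]
      exact ⟨by ring, by ring, by trivial, by ring⟩
  · -- stable estimates
    rintro v ⟨h3, h4⟩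
    constructor
    · intro n
      rw [f4_iter]
      simp only [g4, h3, h4, mul_zero, zero_div, zero_mul, sub_zero, one_mul]
      rw [abs_of_nonneg (add_nonneg (mul_self_nonneg _) (mul_self_nonneg _)),
        abs_of_nonneg (add_nonneg (mul_self_nonneg _) (mul_self_nonneg _)),
        div_mul_div_comm, div_mul_div_comm, two_pow_mul, three_pow_mul,
        div_pow, one_pow]
      have h4pos : (0:ℝ) < 4 ^ n := by positivity
      have h9pos : (0:ℝ) < 9 ^ n := by positivity
      have h49 : (4:ℝ) ^ n ≤ 9 ^ n := pow_le_pow_left₀ (by norm_num) (by norm_num) n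
      have h9 : v.2.1 * v.2.1 / 9 ^ n ≤ v.2.1 * v.2.1 / 4 ^ n := by
        rw [div_le_div_iff₀ h9pos h4pos]
        nlinarith [mul_self_nonneg v.2.1]
      calc v.1 * v.1 / 4 ^ n + v.2.1 * v.2.1 / 9 ^ n
          ≤ v.1 * v.1 / 4 ^ n + v.2.1 * v.2.1 / 4 ^ n := by linarith
        _ = 1 / 4 ^ n * (v.1 * v.1 + v.2.1 * v.2.1) := by ring
    · intro w _
      have heq : (fun n => g4 (f4^[n] v) (f4^[n] w))
          = fun n => (v.1 * w.1) * (1/4 : ℝ) ^ n + (v.2.1 * w.2.1) * (1/9 : ℝ) ^ n := by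
        funext n
        rw [f4_iter, f4_iter]
        simp only [g4, h3, h4, mul_zero, zero_div, zero_mul, sub_zero]
        rw [div_mul_div_comm, div_mul_div_comm, two_pow_mul, three_pow_mul,
          div_pow, div_pow, one_pow]
        ring
      rw [heq]
      have t4 : Tendsto (fun n : ℕ => (v.1 * w.1) * (1/4 : ℝ) ^ n) atTop (𝓝 0) := by
        simpa using (tendsto_pow_atTop_nhds_zero_of_lt_one (by norm_num) (by norm_num)
          : Tendsto (fun n : ℕ => (1/4 : ℝ) ^ n) atTop (𝓝 0)).const_mul (v.1 * w.1)
      have t9 : Tendsto (fun n : ℕ => (v.2.1 * w.2.1) * (1/9 : ℝ) ^ n) atTop (𝓝 0) := by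
        simpa using (tendsto_pow_atTop_nhds_zero_of_lt_one (by norm_num) (by norm_num)
          : Tendsto (fun n : ℕ => (1/9 : ℝ) ^ n) atTop (𝓝 0)).const_mul (v.2.1 * w.2.1)
      simpa using t4.add t9
  · -- unstable estimate
    rintro v ⟨h1, h2, h3⟩ n
    rw [f4_iter]
    simp only [g4, h1, h2, h3, zero_mul, mul_zero, zero_div, sub_zero, add_zero, zero_add,
      zero_sub, abs_neg, inv_one, one_mul]
    rw [abs_of_nonneg (mul_self_nonneg v.2.2.2),
      abs_of_nonneg (mul_self_nonneg ((4:ℝ) ^ n * v.2.2.2))]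
    have hinv : (((1:ℝ)/4) ^ n)⁻¹ = 4 ^ n := by
      rw [div_pow, one_pow]; simp
    rw [hinv]
    have h1le : (1:ℝ) ≤ 4 ^ n := by
      have := pow_le_pow_left₀ (show (0:ℝ) ≤ 1 by norm_num) (show (1:ℝ) ≤ 4 by norm_num) n
      simpa using this
    nlinarith [mul_self_nonneg v.2.2.2, pow_pos (show (0:ℝ) < 4 by norm_num) n]
end
end

section
/- On ℝ⁴ with the bilinear form g(U,V) = u₁v₁ + u₂v₂ − u₃v₃ − u₄v₄, let f : ℝ⁴ → ℝ⁴ be the linear diffeomorphism f(x,y,z,t) = (x/2, y/3, z, 4t). Then the set C = {(0,0,0,0)} is NOT hyperbolic for f up to the distribution p ↦ Eⁿ(p) = {(a, a, 0, a√2) : a ∈ ℝ}; that is, there do not exist constants a > 0, 0 < b < 1 and subspaces Eˢ, Eᵘ of ℝ⁴ with ℝ⁴ = Eˢ ⊕ Eᵘ ⊕ span{(1,1,0,√2)} (internal direct sum) satisfying: (i) every nonzero v ∈ Eˢ ∪ Eᵘ has g(v,v) ≠ 0; (ii) f(Eˢ) = Eˢ and f(Eᵘ) = Eᵘ; (iii)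 for every v ∈ Eˢ and n ∈ ℕ, |g(fⁿ v, fⁿ v)| ≤ a bⁿ |g(v,v)|, and g(fⁿ v, fⁿ w) → 0 as n → ∞ for every w ∈ ℝ⁴ with |g(fⁿ w, fⁿ w)| ≤ a bⁿ |g(w,w)| for all n; (iv) for every v ∈ Eᵘ and n ∈ ℕ, a⁻¹ b⁻ⁿ |g(v,v)| ≤ |g(fⁿ v, fⁿ v)|. -/
open Filter Topology

noncomputable section

lemma f4_iter_s6 (v : ℝ × ℝ × ℝ × ℝ) :
    ∀ n : ℕ, f4^[n] v = (v.1 / 2 ^ n, v.2.1 / 3 ^ n, v.2.2.1, 4 ^ n * v.2.2.2)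
  | 0 => by simp
  | n + 1 => by
      rw [Function.iterate_succ_apply', f4_iter_s6 v n]
      simp only [f4, Prod.mk.injEq, true_and, and_true]
      refine ⟨?_, ?_, ?_⟩ <;> · rw [pow_succ]; ring

lemma g4_iter (v : ℝ × ℝ × ℝ × ℝ) (n : ℕ) :
    g4 (f4^[n] v) (f4^[n] v) =
      v.1 ^ 2 / 4 ^ n + v.2.1 ^ 2 / 9 ^ n - v.2.2.1 ^ 2 - 16 ^ n * v.2.2.2 ^ 2 := by
  rw [f4_iter_s6]
  simp only [g4]
  have h4 : ((4 : ℝ) ^ n) = 2 ^ n * 2 ^ n := by rw [← mul_pow]; norm_num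
  have h9 : ((9 : ℝ) ^ n) = 3 ^ n * 3 ^ n := by rw [← mul_pow]; norm_num
  have h16 : ((16 : ℝ) ^ n) = 4 ^ n * 4 ^ n := by rw [← mul_pow]; norm_num
  have h2 : (2 : ℝ) ^ n ≠ 0 := by positivity
  have h3 : (3 : ℝ) ^ n ≠ 0 := by positivity
  rw [h16, h4, h9]
  field_simp

/-- Any vector obeying the stable decay estimate has vanishing third and fourth
coordinates. -/
lemma stable_coords (a b : ℝ) (ha : 0 < a) (hb0 : 0 < b) (hb1 : b < 1)
    (v : ℝ × ℝ × ℝ × ℝ)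
    (hv : ∀ n : ℕ, |g4 (f4^[n] v) (f4^[n] v)| ≤ a * b ^ n * |g4 v v|) :
    v.2.2.1 = 0 ∧ v.2.2.2 = 0 := by
  obtain ⟨x, y, z, t⟩ := v
  have hv' : ∀ n : ℕ,
      |x ^ 2 / 4 ^ n + y ^ 2 / 9 ^ n - z ^ 2 - 16 ^ n * t ^ 2| ≤
        a * b ^ n * |g4 (x, y, z, t) (x, y, z, t)| := by
    intro n
    have := hv n
    rwa [g4_iter] at this
  have ht : t = 0 := by
    by_contra ht
    have ht2 : 0 < t ^ 2 := by positivity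
    obtain ⟨n, hn⟩ := pow_unbounded_of_one_lt
      ((x ^ 2 + y ^ 2 + a * |g4 (x, y, z, t) (x, y, z, t)|) / t ^ 2)
      (by norm_num : (1 : ℝ) < 16)
    have hn' : x ^ 2 + y ^ 2 + a * |g4 (x, y, z, t) (x, y, z, t)| < 16 ^ n * t ^ 2 := by
      have := (div_lt_iff₀ ht2).mp hn
      linarith
    have hbn : b ^ n ≤ 1 := pow_le_one₀ hb0.le hb1.le
    have habs : a * b ^ n * |g4 (x, y, z, t) (x, y, z, t)| ≤
        a * |g4 (x, y, z, t) (x, y, z, t)| :=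
      mul_le_mul_of_nonneg_right (mul_le_of_le_one_right ha.le hbn) (abs_nonneg _)
    have h1 : x ^ 2 / 4 ^ n ≤ x ^ 2 := div_le_self (by positivity) (one_le_pow₀ (by norm_num))
    have h2 : y ^ 2 / 9 ^ n ≤ y ^ 2 := div_le_self (by positivity) (one_le_pow₀ (by norm_num))
    have h4 : 0 ≤ z ^ 2 := sq_nonneg z
    have h5 := hv' n
    have h6 := neg_abs_le (x ^ 2 / 4 ^ n + y ^ 2 / 9 ^ n - z ^ 2 - 16 ^ n * t ^ 2)
    linarith
  refine ⟨?_, ht⟩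
  subst ht
  by_contra hz
  have hz2 : 0 < z ^ 2 := by positivity
  have hlim : Tendsto
      (fun n : ℕ => a * b ^ n * |g4 (x, y, z, (0:ℝ)) (x, y, z, (0:ℝ))| +
        x ^ 2 / 4 ^ n + y ^ 2 / 9 ^ n) atTop (𝓝 0) := by
    have l1 : Tendsto (fun n : ℕ => a * b ^ n * |g4 (x, y, z, (0:ℝ)) (x, y, z, (0:ℝ))|)
        atTop (𝓝 0) := by
      have h := tendsto_pow_atTop_nhds_zero_of_lt_one hb0.le hb1
      have h2 := (h.const_mul a).mul_const (|g4 (x, y, z, (0:ℝ)) (x, y, z, (0:ℝ))|)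
      simpa using h2
    have l2 : Tendsto (fun n : ℕ => x ^ 2 / 4 ^ n) atTop (𝓝 0) := by
      have h := tendsto_pow_atTop_nhds_zero_of_lt_one
        (by norm_num : (0:ℝ) ≤ 1/4) (by norm_num : (1/4 : ℝ) < 1)
      have h2 := h.const_mul (x ^ 2)
      simpa [div_pow, div_eq_mul_inv, mul_comm] using h2
    have l3 : Tendsto (fun n : ℕ => y ^ 2 / 9 ^ n) atTop (𝓝 0) := by
      have h := tendsto_pow_atTop_nhds_zero_of_lt_one
        (by norm_num : (0:ℝ) ≤ 1/9) (by norm_num : (1/9 : ℝ) < 1)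
      have h2 := h.const_mul (y ^ 2)
      simpa [div_pow, div_eq_mul_inv, mul_comm] using h2
    simpa using (l1.add l2).add l3
  obtain ⟨n, hn⟩ := (hlim.eventually (gt_mem_nhds hz2)).exists
  have h5 := hv' n
  have h6 := neg_abs_le (x ^ 2 / 4 ^ n + y ^ 2 / 9 ^ n - z ^ 2 - 16 ^ n * (0:ℝ) ^ 2)
  have h7 : (16 : ℝ) ^ n * (0:ℝ) ^ 2 = 0 := by ring
  linarith

/-- Example 3.1, second part: `{0}` is NOT a hyperbolic set for `f4` up to the
null distribution spanned by `(1, 1, 0, √2)`. -/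
theorem origin_not_hyperbolic_up_to_110sqrt2 :
    ¬ ∃ (a b : ℝ) (Es Eu : Submodule ℝ (ℝ × ℝ × ℝ × ℝ)),
      0 < a ∧ 0 < b ∧ b < 1 ∧
      (Es ⊓ Eu = ⊥ ∧
        (Es ⊔ Eu) ⊓ Submodule.span ℝ {((1 : ℝ), (1 : ℝ), (0 : ℝ), Real.sqrt 2)} = ⊥ ∧
        Es ⊔ Eu ⊔ Submodule.span ℝ {((1 : ℝ), (1 : ℝ), (0 : ℝ), Real.sqrt 2)} = ⊤) ∧
      (∀ v ∈ Es, v ≠ 0 → g4 v v ≠ 0) ∧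
      (∀ v ∈ Eu, v ≠ 0 → g4 v v ≠ 0) ∧
      f4 '' (Es : Set (ℝ × ℝ × ℝ × ℝ)) = Es ∧
      f4 '' (Eu : Set (ℝ × ℝ × ℝ × ℝ)) = Eu ∧
      (∀ v ∈ Es,
        (∀ n : ℕ, |g4 (f4^[n] v) (f4^[n] v)| ≤ a * b ^ n * |g4 v v|) ∧
        (∀ w : ℝ × ℝ × ℝ × ℝ,
          (∀ n : ℕ, |g4 (f4^[n] w) (f4^[n] w)| ≤ a * b ^ n * |g4 w w|) →
          Tendsto (fun n => g4 (f4^[n] v) (f4^[n] w)) atTop (𝓝 0))) ∧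
      (∀ v ∈ Eu, ∀ n : ℕ,
        a⁻¹ * (b ^ n)⁻¹ * |g4 v v| ≤ |g4 (f4^[n] v) (f4^[n] v)|) := by
  rintro ⟨a, b, Es, Eu, ha, hb0, hb1, ⟨-, -, hsum⟩, -, -, hfEs, hfEu, hEsBound, hEuBound⟩
  -- decompose e₃ = (0,0,1,0)
  have he3 : ((0 : ℝ), (0 : ℝ), (1 : ℝ), (0 : ℝ)) ∈
      Es ⊔ Eu ⊔ Submodule.span ℝ {((1 : ℝ), (1 : ℝ), (0 : ℝ), Real.sqrt 2)} := by
    rw [hsum]; trivial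
  rw [Submodule.mem_sup] at he3
  obtain ⟨y, hy, zsp, hzsp, hyz⟩ := he3
  rw [Submodule.mem_sup] at hy
  obtain ⟨s, hs, u, hu, hsu⟩ := hy
  rw [Submodule.mem_span_singleton] at hzsp
  obtain ⟨c, rfl⟩ := hzsp
  -- the stable vector s has third coordinate 0
  have hsz : s.2.2.1 = 0 := (stable_coords a b ha hb0 hb1 s (hEsBound s hs).1).1
  -- hence u's third coordinate is 1
  have huz : u.2.2.1 = 1 := by
    have h3 := congrArg (fun p : ℝ × ℝ × ℝ × ℝ => p.2.2.1) hyz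
    rw [← hsu] at h3
    simp [Prod.smul_def, smul_eq_mul, hsz] at h3
    linarith
  -- Eu is closed under f4
  have hfu : ∀ v ∈ Eu, f4 v ∈ Eu := by
    intro v hv
    have : f4 v ∈ f4 '' (Eu : Set (ℝ × ℝ × ℝ × ℝ)) := Set.mem_image_of_mem _ hv
    rwa [hfEu] at this
  -- build the vector (0,0,-1,0) ∈ Eu
  set w1 : ℝ × ℝ × ℝ × ℝ := f4 u - (1/2 : ℝ) • u with hw1
  set w2 : ℝ × ℝ × ℝ × ℝ := f4 w1 - (1/3 : ℝ) • w1 with hw2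
  set w3 : ℝ × ℝ × ℝ × ℝ := f4 w2 - (4 : ℝ) • w2 with hw3
  have hw1mem : w1 ∈ Eu := Submodule.sub_mem _ (hfu u hu) (Submodule.smul_mem _ _ hu)
  have hw2mem : w2 ∈ Eu := Submodule.sub_mem _ (hfu _ hw1mem) (Submodule.smul_mem _ _ hw1mem)
  have hw3mem : w3 ∈ Eu := Submodule.sub_mem _ (hfu _ hw2mem) (Submodule.smul_mem _ _ hw2mem)
  have hw3eq : w3 = ((0 : ℝ), (0 : ℝ), (-1 : ℝ), (0 : ℝ)) := by
    obtain ⟨ux, uy, uz, ut⟩ := u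
    simp only at huz
    subst huz
    simp only [hw3, hw2, hw1, f4, Prod.smul_mk, smul_eq_mul, Prod.mk_sub_mk]
    norm_num
    exact ⟨by ring, by ring⟩
  -- apply the unstable growth estimate to w3
  have hgw3 : g4 w3 w3 = -1 := by rw [hw3eq]; simp [g4]
  obtain ⟨n, hn⟩ := pow_unbounded_of_one_lt a ((one_lt_inv₀ hb0).mpr hb1)
  have hbound := hEuBound w3 hw3mem n
  have hiter : f4^[n] w3 = w3 := by
    rw [hw3eq, f4_iter_s6]
    norm_num
  rw [hiter, hgw3] at hbound
  simp only [abs_neg, abs_one, mul_one] at hbound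
  have hlt : a < (b ^ n)⁻¹ := by rwa [inv_pow] at hn
  have h1 : (1 : ℝ) < a⁻¹ * (b ^ n)⁻¹ := by
    have h2 := mul_lt_mul_of_pos_left hlt (inv_pos.mpr ha)
    rwa [inv_mul_cancel₀ ha.ne'] at h2
  linarith
end
end
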